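/- Let h ≥ 1 and let X ⊆ B^h be nonempty. Then the daisy cube Q_h(X) is an isometric subgraph of Q_h: Q_h(X) is connected, and for all vertices u, v of Q_h(X) the distance in Q_h(X) equals the Hamming distance, d_{Q_h(X)}(u,v) = H(u,v). -/

import Mathlib

open SimpleGraph

/-- The hypercube `Q_h` on binary words of length `h`: two words are adjacent
iff their Hamming distance is `1`. -/
def Qcube (h : ℕ) : SimpleGraph (Fin h → Bool) where
  Adj u v := hammingDist u v = 1
  symm := ⟨fun (u v : Fin h → Bool) huv => by
    have huv' : hammingDist u v = 1 := huv
    show hammingDist v u = 1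
    rwa [hammingDist_comm]⟩
  loopless := ⟨fun (u : Fin h → Bool) hu => by
    have hu' : hammingDist u u = 1 := hu
    simp only [hammingDist_self] at hu'; exact absurd hu' (by norm_num)⟩

/-- Vertex set of the daisy cube `Q_h(X)`: all words below some element of `X`. -/
def daisyVerts {h : ℕ} (X : Set (Fin h → Bool)) : Set (Fin h → Bool) :=
  {v | ∃ x ∈ X, v ≤ x}

/-- The daisy cube `Q_h(X)`, the subgraph of `Q_h` induced by `daisyVerts X`. -/
def daisyGraph {h : ℕ} (X : Set (Fin h → Bool)) : SimpleGraph (daisyVerts X) :=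
  SimpleGraph.induce (daisyVerts X) (Qcube h)

/-- `\widehat X`: the set of maximal elements of the poset `(X, ≤)`. -/
def maxSet {h : ℕ} (X : Set (Fin h → Bool)) : Set (Fin h → Bool) :=
  {x ∈ X | ∀ y ∈ X, x ≤ y → x = y}

/-- The all-zeros word `0^h`. -/
def zeroW (h : ℕ) : Fin h → Bool := fun _ => false

/-- Bitwise XOR of words. -/
def xorW {h : ℕ} (u v : Fin h → Bool) : Fin h → Bool := fun i => xor (u i) (v i)

/-- Bitwise AND of words. -/
def andW {h : ℕ} (u v : Fin h → Bool) : Fin h → Bool := fun i => u i && v i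

/-- The weight `w(u)`: the number of ones of a word. -/
def weightW {h : ℕ} (u : Fin h → Bool) : ℕ :=
  (Finset.univ.filter fun i => u i = true).card

/-- The interval `I_G(u,v)`: vertices lying on shortest `u,v`-paths. -/
def gInterval {V : Type*} (G : SimpleGraph V) (u v : V) : Set V :=
  {w | G.dist u w + G.dist w v = G.dist u v}

/-- `N^u(v)`: neighbors of `v` that are closer to `u` than `v` is. -/
def lowerNbrs {V : Type*} (G : SimpleGraph V) (u v : V) : Set V :=
  {z | G.Adj v z ∧ G.dist u z + 1 = G.dist u v}

/-- `α` is an isometric embedding of `G` into `Q_h`. -/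
def IsIsomEmb {V : Type*} (G : SimpleGraph V) {h : ℕ} (α : V → Fin h → Bool) : Prop :=
  ∀ a b, hammingDist (α a) (α b) = G.dist a b

/-- `α` is a proper embedding of `G` into `Q_h`: an isometric embedding such that
`G` is isomorphic to the daisy cube generated by the image of `α`. -/
def IsProperEmb {V : Type*} (G : SimpleGraph V) {h : ℕ} (α : V → Fin h → Bool) : Prop :=
  IsIsomEmb G α ∧ Nonempty (G ≃g daisyGraph (Set.range α))

/-- `v` is a minimal vertex of `G`: some proper embedding sends `v` to `0^h`. -/
def IsMinVertex {V : Type*} (G : SimpleGraph V) (h : ℕ) (v : V) : Prop :=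
  ∃ α : V → Fin h → Bool, IsProperEmb G α ∧ α v = zeroW h

/-- The labeling conditions of Proposition `cubes`/Lemma `partial`: `α v = 0^h`,
the neighbors of `v` get pairwise distinct weight-one labels, and every other
vertex gets the bitwise OR of the labels of its down-neighbors. -/
def goodLabeling {V : Type*} (G : SimpleGraph V) {h : ℕ} (v : V)
    (α : V → Fin h → Bool) : Prop :=
  α v = zeroW h ∧
  Set.InjOn α (G.neighborSet v) ∧
  (∀ z ∈ G.neighborSet v, weightW (α z) = 1) ∧
  (∀ u ∉ insert v (G.neighborSet v),
    ∀ i, α u i = true ↔ ∃ z ∈ lowerNbrs G v u, α z i = true)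


lemma hamming_update_close {h : ℕ} (u v : Fin h → Bool) (i : Fin h) (hi : u i ≠ v i) :
    hammingDist (Function.update u i (v i)) v + 1 = hammingDist u v := by
  classical
  have key : (Finset.univ.filter fun j => Function.update u i (v i) j ≠ v j)
      = (Finset.univ.filter fun j => u j ≠ v j).erase i := by
    ext j
    by_cases hj : j = i
    · simp only [hj, Function.update_apply, if_pos rfl]
      simp [hi]
    · simp [hj, Function.update_apply]
  unfold hammingDist
  rw [show ({j | Function.update u i (v i) j ≠ v j} : Finset (Fin h))
      = (Finset.univ.filter fun j => Function.update u i (v i) j ≠ v j) from rfl, key,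
    Finset.card_erase_add_one (by simp [hi])]

lemma hamming_update_adj {h : ℕ} (u v : Fin h → Bool) (i : Fin h) (hi : u i ≠ v i) :
    hammingDist u (Function.update u i (v i)) = 1 := by
  classical
  have key : ({j | u j ≠ Function.update u i (v i) j} : Finset (Fin h)) = {i} := by
    ext j
    by_cases hj : j = i
    · simp only [hj, Function.update_apply, if_pos rfl, Finset.mem_singleton]
      simpa using hi
    · simp [hj, Function.update_apply]
  unfold hammingDist
  rw [key, Finset.card_singleton]

lemma daisy_walk {h : ℕ} {X : Set (Fin h → Bool)} :
    ∀ (n : ℕ) (u v : daisyVerts X), hammingDist (u : Fin h → Bool) v = n →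
      ∃ p : (daisyGraph X).Walk u v, p.length = n := by
  intro n
  induction n with
  | zero =>
    intro u v huv
    have : (u : Fin h → Bool) = v := by
      rwa [hammingDist_eq_zero] at huv
    have : u = v := Subtype.ext this
    subst this
    exact ⟨SimpleGraph.Walk.nil, rfl⟩
  | succ n ih =>
    intro u v huv
    classical
    have hne : (u : Fin h → Bool) ≠ v := by
      intro hEq
      rw [hEq, hammingDist_self] at huv
      omega
    -- find a coordinate to flip
    by_cases hA : ∃ i, (u : Fin h → Bool) i = true ∧ (v : Fin h → Bool) i = false
    · obtain ⟨i, hui, hvi⟩ := hA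
      have hi : (u : Fin h → Bool) i ≠ (v : Fin h → Bool) i := by simp [hui, hvi]
      set u' : Fin h → Bool := Function.update (u : Fin h → Bool) i ((v : Fin h → Bool) i) with hu'
      have hle : u' ≤ (u : Fin h → Bool) := by
        intro j
        by_cases hj : j = i <;> simp [hu', hj, Function.update_apply, hvi]
      obtain ⟨x, hxX, hux⟩ := u.2
      have hmem : u' ∈ daisyVerts X := ⟨x, hxX, le_trans hle hux⟩
      have hdist : hammingDist u' (v : Fin h → Bool) = n := by
        have h2 := hamming_update_close (u : Fin h → Bool) v i hi
        rw [← hu'] at h2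
        omega
      obtain ⟨p, hp⟩ := ih ⟨u', hmem⟩ v hdist
      have hadj : (daisyGraph X).Adj u ⟨u', hmem⟩ := by
        show hammingDist (u : Fin h → Bool) u' = 1
        exact hamming_update_adj _ _ i hi
      exact ⟨SimpleGraph.Walk.cons hadj p, by simp [hp]⟩
    · push_neg at hA
      have hle : (u : Fin h → Bool) ≤ (v : Fin h → Bool) := by
        intro j
        cases hu : (u : Fin h → Bool) j with
        | false => simp
        | true =>
          have hv := hA j hu
          have hvt : (v : Fin h → Bool) j = true := by
            cases hvj : (v : Fin h → Bool) j
            · exact absurd hvj hv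
            · rfl
          simp [hu, hvt]
      obtain ⟨i, hi⟩ : ∃ i, (u : Fin h → Bool) i ≠ (v : Fin h → Bool) i := by
        by_contra hc
        push_neg at hc
        exact hne (funext hc)
      set u' : Fin h → Bool := Function.update (u : Fin h → Bool) i ((v : Fin h → Bool) i) with hu'
      have hle' : u' ≤ (v : Fin h → Bool) := by
        intro j
        by_cases hj : j = i <;> simp [hu', hj, Function.update_apply]
        exact hle j
      obtain ⟨x, hxX, hvx⟩ := v.2
      have hmem : u' ∈ daisyVerts X := ⟨x, hxX, le_trans hle' hvx⟩
      have hdist : hammingDist u' (v : Fin h → Bool) = n := by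
        have h2 := hamming_update_close (u : Fin h → Bool) v i hi
        rw [← hu'] at h2
        omega
      obtain ⟨p, hp⟩ := ih ⟨u', hmem⟩ v hdist
      have hadj : (daisyGraph X).Adj u ⟨u', hmem⟩ := by
        show hammingDist (u : Fin h → Bool) u' = 1
        exact hamming_update_adj _ _ i hi
      exact ⟨SimpleGraph.Walk.cons hadj p, by simp [hp]⟩

lemma ham_le_walk {h : ℕ} {X : Set (Fin h → Bool)} {u v : daisyVerts X}
    (p : (daisyGraph X).Walk u v) :
    hammingDist (u : Fin h → Bool) v ≤ p.length := by
  induction p with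
  | nil => simp
  | @cons a b c ha p ih =>
    have h1 : hammingDist (a : Fin h → Bool) b = 1 := ha
    calc hammingDist (a : Fin h → Bool) c
        ≤ hammingDist (a : Fin h → Bool) b + hammingDist (b : Fin h → Bool) c :=
          hammingDist_triangle _ _ _
      _ ≤ 1 + p.length := by omega
      _ = (SimpleGraph.Walk.cons ha p).length := by simp [Nat.add_comm]

/-- For nonempty `X ⊆ B^h`, the daisy cube `Q_h(X)` is an isometric
subgraph of `Q_h`: it is connected and its graph distance equals the Hamming
distance. -/
theorem stmt_17 (h : ℕ) (hh : 1 ≤ h) (X : Set (Fin h → Bool)) (hX : X.Nonempty) :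
    (daisyGraph X).Connected ∧
    ∀ u v : daisyVerts X,
      (daisyGraph X).dist u v = hammingDist (u : Fin h → Bool) (v : Fin h → Bool) := by
  obtain ⟨x, hxX⟩ := hX
  have hne : Nonempty (daisyVerts X) := ⟨⟨x, x, hxX, le_refl x⟩⟩
  have hreach : ∀ u v : daisyVerts X, (daisyGraph X).Reachable u v := by
    intro u v
    obtain ⟨p, _⟩ := daisy_walk (hammingDist (u : Fin h → Bool) v) u v rfl
    exact p.reachable
  refine ⟨{ preconnected := hreach, nonempty := hne }, fun u v => ?_⟩
  obtain ⟨p, hp⟩ := daisy_walk (hammingDist (u : Fin h → Bool) v) u v rfl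
  have hle : (daisyGraph X).dist u v ≤ hammingDist (u : Fin h → Bool) v := by
    have := SimpleGraph.dist_le p
    omega
  obtain ⟨q, hq⟩ := (hreach u v).exists_walk_length_eq_dist
  have hge := ham_le_walk q
  omega
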